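/- Every nonzero word W over Φ that is equivalent in H to a word containing the letter L satisfies I0(W) = I1(W) = I2(W) = I3(W) = I4(W) = 1, where I0 counts occurrences of L, M; I1 counts L, P; I2 counts L, g, R; I3 counts L, g, Q; I4 counts L, g, t1, t2, t3, s1, s2. -/
import Mathlib

inductive Phi
  | L | M | P | Q | R | g | s1 | s2 | t1 | t2 | t3 | a1 | a2 | a3
deriving DecidableEq

open Phi

abbrev W0 := WithZero (FreeMonoid Phi)

def w (l : List Phi) : W0 := ((FreeMonoid.ofList l : FreeMonoid Phi) : W0)

def ai : Fin 3 → Phi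
  | 0 => a1 | 1 => a2 | 2 => a3

def ti : Fin 3 → Phi
  | 0 => t1 | 1 => t2 | 2 => t3

def si : Fin 2 → Phi
  | 0 => s1 | 1 => s2

/-- `x` is one of the letters `a1, a2, a3`. -/
def isA (x : Phi) : Prop := x = a1 ∨ x = a2 ∨ x = a3

/-- The defining relations (1)–(14) of the semigroup `H`. -/
inductive rel : W0 → W0 → Prop
  | r1L (x : Phi) : rel (w [x, L]) 0
  | r1M (x : Phi) : rel (w [x, M]) 0
  | r2 : rel (w [L]) (w [M, P, g])
  | r3 (i : Fin 3) : rel (w [g, ai i]) (w [ai i, g])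
  | r4 (x : Phi) (h : ¬ isA x) : rel (w [g, x]) 0
  | r5 (i j : Fin 3) : rel (w [ai i, g, ai j]) (w [ai i, R, s1, Q, ai j])
  | r6 (i : Fin 3) (x : Phi) (h : x = R ∨ isA x) : rel (w [ti i, x]) (w [x, ti i])
  | r7 (i : Fin 3) : rel (w [P, ai i, ti i]) (w [ai i, P, s1])
  | r8 (i j : Fin 3) (h : i ≠ j) : rel (w [P, ai j, ti i]) (w [ai j, P, s2])
  | r9 (i : Fin 3) (j : Fin 2) : rel (w [si j, ai i]) (w [ai i, si j])
  | r10 : rel (w [s1, R]) (w [R, s1])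
  | r11 (i : Fin 3) : rel (w [s1, Q, ai i]) (w [ti i, ai i, Q])
  | r12 : rel (w [P, R, s1]) 0
  | r13 (i : Fin 3) : rel (w [s2, R, ai i]) (w [ai i, s2, R])
  | r14 (i : Fin 3) : rel (w [s2, R, Q, ai i]) (w [R, ti i, ai i, Q])

/-- The congruence on the free monoid with zero generated by the relations. -/
def hCon : Con W0 := conGen rel

/-- The semigroup (with zero) `H` of the paper. -/
abbrev H := hCon.Quotient

/-- The quotient map. -/
def q : W0 →* H := hCon.mk'

/-- `l` is a word in the letters `a1, a2, a3`. -/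
def Aword (l : List Phi) : Prop := ∀ x ∈ l, isA x

/-- `l` is square-free: it contains no factor `Y ++ Y` with `Y` nonempty. -/
def SqFree (l : List Phi) : Prop := ∀ Y : List Phi, Y ≠ [] → ¬ (Y ++ Y) <:+: l

/-! ### Auxiliary machinery -/

/-- Weight of a (possibly zero) word under a letter-weight function `c`. -/
def wt (c : Phi → ℕ) : W0 → ℕ :=
  fun u => Option.rec 0 (fun l => ((FreeMonoid.toList l).map c).sum) u

lemma wt_w (c : Phi → ℕ) (l : List Phi) : wt c (w l) = (l.map c).sum := rfl

lemma w_append (l1 l2 : List Phi) : w (l1 ++ l2) = w l1 * w l2 := rfl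

lemma wt_mul (c : Phi → ℕ) (a b : W0) (ha : a ≠ 0) (hb : b ≠ 0) :
    wt c (a * b) = wt c a + wt c b := by
  obtain ⟨x, rfl⟩ := WithZero.ne_zero_iff_exists.mp ha
  obtain ⟨y, rfl⟩ := WithZero.ne_zero_iff_exists.mp hb
  show ((FreeMonoid.toList (x * y)).map c).sum = _
  simp [FreeMonoid.toList_mul]
  rfl

/-- Relations either kill a word or preserve any admissible weight. -/
lemma rel_wt (c : Phi → ℕ)
    (hcL : c L = c M + c P + c g)
    (hcg : c g = c R + c s1 + c Q)
    (hct : ∀ i, c (ti i) = c s1)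
    (hcs : c s2 = c s1) :
    ∀ u v, rel u v → v = 0 ∨ wt c u = wt c v := by
  intro u v h
  cases h with
  | r1L x => exact Or.inl rfl
  | r1M x => exact Or.inl rfl
  | r4 x h => exact Or.inl rfl
  | r12 => exact Or.inl rfl
  | r2 => refine Or.inr ?_; simp [wt_w]; omega
  | r3 i => refine Or.inr ?_; simp [wt_w]; omega
  | r5 i j => refine Or.inr ?_; simp [wt_w]; omega
  | r6 i x h => refine Or.inr ?_; simp [wt_w]; omega
  | r7 i => refine Or.inr ?_; have := hct i; simp [wt_w]; omega
  | r8 i j h => refine Or.inr ?_; have := hct i; simp [wt_w]; omega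
  | r9 i j => refine Or.inr ?_; simp [wt_w]; omega
  | r10 => refine Or.inr ?_; simp [wt_w]; omega
  | r11 i => refine Or.inr ?_; have := hct i; simp [wt_w]; omega
  | r13 i => refine Or.inr ?_; simp [wt_w]; omega
  | r14 i => refine Or.inr ?_; have := hct i; simp [wt_w]; omega

/-- Key invariance lemma: along the congruence, either the class is zero
or any admissible weight is preserved. -/
lemma key_wt (c : Phi → ℕ)
    (hr : ∀ u v, rel u v → v = 0 ∨ wt c u = wt c v) :
    ∀ u v : W0, hCon u v → hCon u 0 ∨ wt c u = wt c v := by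
  intro u v h
  have h' : ConGen.Rel rel u v := h
  clear h
  induction h' with
  | of x y hxy =>
    rcases hr x y hxy with h0 | he
    · subst h0; exact Or.inl (ConGen.Rel.of _ _ hxy)
    · exact Or.inr he
  | refl x => exact Or.inr rfl
  | symm hxy ih =>
    have hxy' : hCon _ _ := hxy
    rcases ih with h0 | he
    · exact Or.inl (hCon.trans (hCon.symm hxy') h0)
    · exact Or.inr he.symm
  | trans hxy hyz ih1 ih2 =>
    have hxy' : hCon _ _ := hxy
    rcases ih1 with h0 | he1
    · exact Or.inl h0
    · rcases ih2 with h0 | he2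
      · exact Or.inl (hCon.trans hxy' h0)
      · exact Or.inr (he1.trans he2)
  | mul hab hcd ih1 ih2 =>
    rename_i a b c' d
    have hab' : hCon a b := hab
    have hcd' : hCon c' d := hcd
    by_cases ha : a = 0
    · subst ha; exact Or.inl (by simpa using hCon.refl (0 : W0))
    by_cases hc : c' = 0
    · subst hc; exact Or.inl (by simpa using hCon.refl (0 : W0))
    by_cases hb : b = 0
    · subst hb
      refine Or.inl ?_
      have : hCon (a * c') (0 * c') := hCon.mul hab' (hCon.refl c')
      simpa using this
    by_cases hd : d = 0
    · subst hd
      refine Or.inl ?_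
      have : hCon (a * c') (b * 0) := hCon.mul hab' hcd'
      simpa using this
    rcases ih1 with h0 | he1
    · refine Or.inl ?_
      have : hCon (a * c') (0 * c') := hCon.mul h0 (hCon.refl c')
      simpa using this
    rcases ih2 with h0 | he2
    · refine Or.inl ?_
      have : hCon (a * c') (a * 0) := hCon.mul (hCon.refl a) h0
      simpa using this
    refine Or.inr ?_
    rw [wt_mul c a c' ha hc, wt_mul c b d hb hd, he1, he2]

/-- A word with a zero factor is zero in `H`. -/
lemma factor_zero (u v : W0) (a : W0) (h : hCon a 0) : hCon (u * a * v) 0 := by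
  have h1 : hCon (u * a * v) (u * 0 * v) := hCon.mul (hCon.mul (hCon.refl u) h) (hCon.refl v)
  simpa using h1

lemma isA_cases {x : Phi} (h : isA x) : ∃ i : Fin 3, x = ai i := by
  rcases h with h | h | h
  · exact ⟨0, h⟩
  · exact ⟨1, h⟩
  · exact ⟨2, h⟩

/-- Pushing `g` through: if the suffix contains a non-`a` letter the word is zero. -/
lemma gpush : ∀ u : List Phi, (∃ x ∈ u, ¬ isA x) → hCon (w (g :: u)) 0 := by
  intro u
  induction u with
  | nil => rintro ⟨x, hx, -⟩; simp at hx
  | cons x t ih =>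
    rintro ⟨y, hy, hyA⟩
    by_cases hx : isA x
    · have hyt : y ∈ t := by
        rcases List.mem_cons.mp hy with rfl | h
        · exact absurd hx hyA
        · exact h
      obtain ⟨i, rfl⟩ := isA_cases hx
      have step1 : hCon (w (g :: ai i :: t)) (w (ai i :: g :: t)) := by
        have : hCon (w [g, ai i] * w t) (w [ai i, g] * w t) :=
          hCon.mul (ConGen.Rel.of _ _ (rel.r3 i)) (hCon.refl (w t))
        simpa [← w_append] using this
      have step2 : hCon (w (ai i :: g :: t)) 0 := by
        have : hCon (w [ai i] * w (g :: t)) (w [ai i] * 0) :=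
          hCon.mul (hCon.refl (w [ai i])) (ih ⟨y, hyt, hyA⟩)
        simpa [← w_append] using this
      exact hCon.trans step1 step2
    · have : hCon (w [g, x] * w t) (0 * w t) :=
        hCon.mul (ConGen.Rel.of _ _ (rel.r4 x hx)) (hCon.refl (w t))
      simpa [← w_append] using this

/-- A word beginning with `L` followed by a non-`a`-word is zero. -/
lemma Lbad (u : List Phi) (hu : ∃ x ∈ u, ¬ isA x) : hCon (w (L :: u)) 0 := by
  have step1 : hCon (w (L :: u)) (w (M :: Phi.P :: g :: u)) := by
    have : hCon (w [L] * w u) (w [M, Phi.P, g] * w u) :=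
      hCon.mul (ConGen.Rel.of _ _ rel.r2) (hCon.refl (w u))
    simpa [← w_append] using this
  have step2 : hCon (w (M :: Phi.P :: g :: u)) 0 := by
    have : hCon (w [M, Phi.P] * w (g :: u)) (w [M, Phi.P] * 0) :=
      hCon.mul (hCon.refl (w [M, Phi.P])) (gpush u hu)
    simpa [← w_append] using this
  exact hCon.trans step1 step2

/-- If `L` occurs but not at the head, the word is zero. -/
lemma Lmid (p : List Phi) (x : Phi) (r' : List Phi) :
    hCon (w (p ++ x :: L :: r')) 0 := by
  have h0 : hCon (w [x, L]) 0 := ConGen.Rel.of _ _ (rel.r1L x)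
  have : hCon (w p * w [x, L] * w r') 0 := factor_zero _ _ _ h0
  have he : w (p ++ x :: L :: r') = w p * w [x, L] * w r' := by
    rw [show p ++ x :: L :: r' = p ++ [x, L] ++ r' by simp, w_append, w_append]
  rwa [he]

/-! ### The five weight functions -/

def c0 : Phi → ℕ | L => 1 | M => 1 | _ => 0
def c1 : Phi → ℕ | L => 1 | P => 1 | _ => 0
def c2 : Phi → ℕ | L => 1 | g => 1 | R => 1 | _ => 0
def c3 : Phi → ℕ | L => 1 | g => 1 | Q => 1 | _ => 0
def c4 : Phi → ℕ
  | L => 1 | g => 1 | t1 => 1 | t2 => 1 | t3 => 1 | s1 => 1 | s2 => 1 | _ => 0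

lemma sum_c0 (l : List Phi) : (l.map c0).sum = l.count L + l.count M := by
  induction l with
  | nil => rfl
  | cons x t ih => cases x <;> simp_all [c0, List.count_cons] <;> omega

lemma sum_c1 (l : List Phi) : (l.map c1).sum = l.count L + l.count P := by
  induction l with
  | nil => rfl
  | cons x t ih => cases x <;> simp_all [c1, List.count_cons] <;> omega

lemma sum_c2 (l : List Phi) : (l.map c2).sum = l.count L + l.count g + l.count R := by
  induction l with
  | nil => rfl
  | cons x t ih => cases x <;> simp_all [c2, List.count_cons] <;> omega

lemma sum_c3 (l : List Phi) : (l.map c3).sum = l.count L + l.count g + l.count Q := by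
  induction l with
  | nil => rfl
  | cons x t ih => cases x <;> simp_all [c3, List.count_cons] <;> omega

lemma sum_c4 (l : List Phi) :
    (l.map c4).sum = l.count L + l.count g + l.count t1 + l.count t2 + l.count t3
      + l.count s1 + l.count s2 := by
  induction l with
  | nil => rfl
  | cons x t ih => cases x <;> simp_all [c4, List.count_cons] <;> omega

lemma sum_A_zero (c : Phi → ℕ) (hA : c a1 = 0 ∧ c a2 = 0 ∧ c a3 = 0)
    (u : List Phi) (hu : Aword u) : (u.map c).sum = 0 := by
  apply List.sum_eq_zero
  intro n hn
  rcases List.mem_map.mp hn with ⟨x, hx, rfl⟩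
  rcases hu x hx with h | h | h <;> subst h <;> simp [hA.1, hA.2.1, hA.2.2]

/-- every nonzero word `W` equivalent in `H` to a word containing `L`
has all five invariants `I0,…,I4` equal to `1`. -/
theorem stmt10 (W W' : List Phi) (hL : L ∈ W') (hequiv : hCon (w W) (w W'))
    (hnz : q (w W) ≠ q 0) :
    W.count L + W.count M = 1 ∧
    W.count L + W.count P = 1 ∧
    W.count L + W.count g + W.count R = 1 ∧
    W.count L + W.count g + W.count Q = 1 ∧
    W.count L + W.count g + W.count t1 + W.count t2 + W.count t3
      + W.count s1 + W.count s2 = 1 := by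
  -- `w W` is not congruent to `0`
  have hnz0 : ¬ hCon (w W) 0 := by
    intro h
    exact hnz ((Con.eq hCon).mpr h)
  -- decompose `W'` at an occurrence of `L`
  obtain ⟨p, r', hW'⟩ := List.append_of_mem hL
  -- `p` must be empty
  have hp : p = [] := by
    rcases List.eq_nil_or_concat p with h | ⟨p', x, rfl⟩
    · exact h
    · exfalso
      apply hnz0
      refine hCon.trans hequiv ?_
      rw [hW']
      simpa using Lmid p' x r'
  subst hp
  simp only [List.nil_append] at hW'
  -- the tail must be an `A`-word
  have hr' : Aword r' := by
    by_contra hbad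
    apply hnz0
    refine hCon.trans hequiv ?_
    rw [hW']
    apply Lbad
    simpa [Aword, not_forall] using hbad
  -- generic conclusion for an admissible weight function
  have main : ∀ c : Phi → ℕ,
      c L = c M + c P + c g →
      c g = c R + c s1 + c Q →
      (∀ i, c (ti i) = c s1) →
      c s2 = c s1 →
      c a1 = 0 → c a2 = 0 → c a3 = 0 →
      c L = 1 →
      (W.map c).sum = 1 := by
    intro c hcL hcg hct hcs ha1 ha2 ha3 hcL1
    have hkey := key_wt c (rel_wt c hcL hcg hct hcs) (w W) (w W') hequiv
    rcases hkey with h0 | he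
    · exact absurd h0 hnz0
    have : (W.map c).sum = (W'.map c).sum := by
      simpa [wt_w] using he
    rw [this, hW']
    simp [sum_A_zero c ⟨ha1, ha2, ha3⟩ r' hr', hcL1]
  refine ⟨?_, ?_, ?_, ?_, ?_⟩
  · rw [← sum_c0]; exact main c0 rfl rfl (by intro i; fin_cases i <;> rfl) rfl rfl rfl rfl rfl
  · rw [← sum_c1]; exact main c1 rfl rfl (by intro i; fin_cases i <;> rfl) rfl rfl rfl rfl rfl
  · rw [← sum_c2]; exact main c2 rfl rfl (by intro i; fin_cases i <;> rfl) rfl rfl rfl rfl rfl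
  · rw [← sum_c3]; exact main c3 rfl rfl (by intro i; fin_cases i <;> rfl) rfl rfl rfl rfl rfl
  · rw [← sum_c4]; exact main c4 rfl rfl (by intro i; fin_cases i <;> rfl) rfl rfl rfl rfl rfl
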